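/- arXiv:2508.21691 — 4 statements merged into one kernel-verified Lean document; each statement's English description precedes it below -/
import Mathlib

section
/- For every positive integer n, every real σ > 0 and every ε > 0 there exists a constant C > 0 such that for all real R ≥ 2: ∑_{p prime, p < R^σ} (log p)^n · ∑_{m=0}^{⌊2 log R⌋} 2^m · m · p^{3m/4} · (p−1)/(p+1)^{m+1} ≤ C · R^{max(3σ/4, 0.27) + ε}. -/
/-!
Put `x = 2 q^{3/4} / (q + 1)`; the `m`-th inner summand at `q` is at most `m x^m`.
By AM–GM, `x ≤ 57/50` for every `q ≥ 0`, and as `m ≤ 2 log R` we get `(57/50)^m ≤ R^{0.2626}`: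
the primes below `256` contribute `O(R^{0.27})`, the extra `0.0074` absorbing the powers of
`log R`. For `q ≥ 256` instead `x ≤ 1/2`, so the inner sum is at most `4x ≤ 8 q^{3/4} / q
≤ 8 R^{3σ/4} / q`, and summing `1/q` costs only one more logarithm, which together with
`(log p)^n` is absorbed by `R^ε`.
-/

open Real Finset

noncomputable def innerSum (K : ℕ) (q : ℝ) : ℝ :=
  ∑ m ∈ range K, (2:ℝ)^m * (m:ℝ) * q ^ (3*(m:ℝ)/4) * (q - 1) / (q + 1)^(m+1)

lemma summand_le_mul_pow {q : ℝ} (hq : 1 ≤ q) (m : ℕ) :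
    (2:ℝ)^m * m * q ^ (3*(m:ℝ)/4) * (q - 1) / (q + 1)^(m+1)
      ≤ m * (2 * q ^ (3/4:ℝ) / (q + 1))^m := by
  have hq1 : 0 < q + 1 := by linarith
  have hpow : q ^ (3*(m:ℝ)/4) = (q ^ (3/4:ℝ))^m := by
    rw [← rpow_natCast, ← rpow_mul (by linarith)]; ring_nf
  calc (2:ℝ)^m * m * q ^ (3*(m:ℝ)/4) * (q - 1) / (q + 1)^(m+1)
      = m * (2 * q ^ (3/4:ℝ) / (q + 1))^m * ((q - 1) / (q + 1)) := by
        rw [hpow, div_pow, mul_pow, pow_succ]; field_simp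
    _ ≤ m * (2 * q ^ (3/4:ℝ) / (q + 1))^m :=
        mul_le_of_le_one_right (by positivity) ((div_le_one hq1).2 (by linarith))

lemma two_mul_rpow_div_add_one_le {q : ℝ} (hq : 0 ≤ q) :
    2 * q ^ (3/4:ℝ) / (q + 1) ≤ 57/50 := by
  rw [div_le_iff₀ (by linarith)]
  have h4 : (q ^ (3/4:ℝ))^4 = q^3 := by
    rw [← rpow_natCast, ← rpow_mul hq]; norm_num
  refine le_of_pow_le_pow_left₀ (n := 4) (by norm_num) (by positivity) ?_
  -- AM–GM for `q/3 + q/3 + q/3 + 1` gives `256 q^3 ≤ 27 (q+1)^4`.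
  calc (2 * q ^ (3/4:ℝ))^4 = 16 * q^3 := by rw [mul_pow, h4]; norm_num
    _ ≤ 27/16 * (q+1)^4 := by
        nlinarith [mul_nonneg (sq_nonneg (q-3)) (by positivity : (0:ℝ) ≤ 27*q^2+14*q+3)]
    _ ≤ (57/50 * (q+1))^4 := by rw [mul_pow]; gcongr; norm_num

lemma two_mul_rpow_div_add_one_le_half {q : ℝ} (hq : 256 ≤ q) :
    2 * q ^ (3/4:ℝ) / (q + 1) ≤ 1/2 := by
  have hq0 : 0 ≤ q := by linarith
  have h4 : 4 ≤ q ^ (1/4:ℝ) := by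
    calc (4:ℝ) = 256 ^ (1/4:ℝ) := by
          rw [show (256:ℝ) = 4^(4:ℝ) by norm_num, ← rpow_mul (by norm_num)]; norm_num
      _ ≤ q ^ (1/4:ℝ) := by gcongr
  have hsplit : q = q ^ (1/4:ℝ) * q ^ (3/4:ℝ) := by
    rw [← rpow_add' hq0 (by norm_num)]; norm_num
  rw [div_le_iff₀ (by linarith)]
  nlinarith [rpow_nonneg hq0 (3/4:ℝ)]

lemma sum_range_succ_mul_pow_le {c : ℝ} (hc : 1 ≤ c) (M : ℕ) :
    ∑ m ∈ range (M + 1), (m:ℝ) * c^m ≤ (M + 1)^2 * c^M := by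
  calc ∑ m ∈ range (M + 1), (m:ℝ) * c^m ≤ ∑ _m ∈ range (M + 1), (M:ℝ) * c^M := by
        gcongr with m hm
        all_goals first | exact hc | exact_mod_cast Nat.lt_succ_iff.mp (mem_range.mp hm)
    _ ≤ (M + 1)^2 * c^M := by
        rw [sum_const, card_range, nsmul_eq_mul]; push_cast
        have : 0 ≤ c^M := by positivity
        nlinarith

lemma sum_range_mul_pow_le {c : ℝ} (hc0 : 0 ≤ c) (hc : c ≤ 1/2) (K : ℕ) :
    ∑ m ∈ range K, (m:ℝ) * c^m ≤ 4 * c := by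
  have hsum := hasSum_coe_mul_geometric_of_norm_lt_one (𝕜 := ℝ)
    (by rw [norm_of_nonneg hc0]; linarith : ‖c‖ < 1)
  refine (sum_le_hasSum _ (fun m _ => by positivity) hsum).trans ?_
  rw [div_le_iff₀ (by nlinarith)]
  nlinarith [mul_nonneg hc0 (mul_nonneg (by linarith : 0 ≤ 1/2 - c) (by linarith : 0 ≤ 3/2 - c))]

lemma innerSum_le_sq_mul_pow {q : ℝ} (hq : 1 ≤ q) (M : ℕ) :
    innerSum (M + 1) q ≤ (M + 1)^2 * (57/50)^M :=
  calc innerSum (M + 1) q ≤ ∑ m ∈ range (M + 1), (m:ℝ) * (57/50)^m :=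
        sum_le_sum fun m _ => (summand_le_mul_pow hq m).trans <| mul_le_mul_of_nonneg_left
          (pow_le_pow_left₀ (by positivity) (two_mul_rpow_div_add_one_le (by linarith)) m)
          (by positivity)
    _ ≤ (M + 1)^2 * (57/50)^M := sum_range_succ_mul_pow_le (by norm_num) M

lemma innerSum_le_eight_mul_rpow_div {q : ℝ} (hq : 256 ≤ q) (K : ℕ) :
    innerSum K q ≤ 8 * q ^ (3/4:ℝ) / q :=
  calc innerSum K q ≤ ∑ m ∈ range K, (m:ℝ) * (2 * q ^ (3/4:ℝ) / (q + 1))^m :=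
        sum_le_sum fun m _ => summand_le_mul_pow (by linarith) m
    _ ≤ 4 * (2 * q ^ (3/4:ℝ) / (q + 1)) :=
        sum_range_mul_pow_le (by positivity) (two_mul_rpow_div_add_one_le_half hq) K
    _ = 8 * q ^ (3/4:ℝ) / (q + 1) := by ring
    _ ≤ 8 * q ^ (3/4:ℝ) / q := div_le_div_of_nonneg_left (by positivity) (by linarith) (by linarith)

lemma log_pow_mul_innerSum_le {q X : ℝ} (hq : 1 ≤ q) (hqX : q ≤ X) (n M : ℕ) :
    log q ^ n * innerSum (M + 1) q ≤
      (if q < 256 then log 256 ^ n * ((M + 1)^2 * (57/50)^M) else 0)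
        + 8 * log X ^ n * X ^ (3/4:ℝ) / q := by
  have hlog : 0 ≤ log q := log_nonneg hq
  have hS : 0 ≤ innerSum (M + 1) q := sum_nonneg fun m _ => by
    have : 0 ≤ q - 1 := by linarith
    positivity
  have hlogX : 0 ≤ log X := log_nonneg (hq.trans hqX)
  have hX0 : 0 < X := by linarith
  split_ifs with h256
  · have : 0 ≤ 8 * log X ^ n * X ^ (3/4:ℝ) / q := by positivity
    have := mul_le_mul (pow_le_pow_left₀ hlog (log_le_log (by linarith) h256.le) n)
      (innerSum_le_sq_mul_pow hq M) hS (by positivity)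
    linarith
  · push Not at h256
    calc log q ^ n * innerSum (M + 1) q ≤ log X ^ n * (8 * q ^ (3/4:ℝ) / q) :=
          mul_le_mul (pow_le_pow_left₀ hlog (log_le_log (by linarith) hqX) n)
            (innerSum_le_eight_mul_rpow_div h256 _) hS (by positivity)
      _ ≤ log X ^ n * (8 * X ^ (3/4:ℝ) / q) := by gcongr
      _ = 0 + 8 * log X ^ n * X ^ (3/4:ℝ) / q := by ring

lemma sum_range_ite_lt_le {A : ℝ} (hA : 0 ≤ A) (N : ℕ) :
    ∑ p ∈ range N, (if (p:ℝ) < 256 then A else 0) ≤ 256 * A := by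
  rw [← sum_filter, sum_const, nsmul_eq_mul]
  gcongr
  have : (range N).filter (fun p : ℕ => (p:ℝ) < 256) ⊆ range 256 := fun p hp => by
    simp only [mem_filter, mem_range] at hp ⊢
    exact_mod_cast hp.2
  exact_mod_cast (card_le_card this).trans_eq (card_range 256)

lemma sum_range_inv_le_two_add_log {X : ℝ} (hX : 1 ≤ X) :
    ∑ p ∈ range (⌈X⌉₊ + 1), (p:ℝ)⁻¹ ≤ 2 + log X := by
  have hN : (⌈X⌉₊ : ℝ) ≤ 2 * X := by linarith [Nat.ceil_lt_add_one (by linarith : 0 ≤ X)]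
  calc ∑ p ∈ range (⌈X⌉₊ + 1), (p:ℝ)⁻¹ = (harmonic ⌈X⌉₊ : ℝ) := by
        -- the term `p = 0` is `0⁻¹ = 0`
        rw [sum_range_succ']; simp [harmonic]
    _ ≤ 1 + log ⌈X⌉₊ := harmonic_le_one_add_log _
    _ ≤ 1 + log (2 * X) := by gcongr
    _ = 1 + log 2 + log X := by rw [log_mul two_ne_zero (by linarith)]; ring
    _ ≤ 2 + log X := by linarith [log_two_lt_d9]

lemma sum_primes_le {X : ℝ} (hX : 1 ≤ X) (n M : ℕ) :
    (∑ p ∈ range (⌈X⌉₊ + 1),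
        if p.Prime ∧ (p:ℝ) < X then log p ^ n * innerSum (M + 1) p else 0)
      ≤ 256 * (log 256 ^ n * ((M + 1)^2 * (57/50)^M))
        + 8 * log X ^ n * X ^ (3/4:ℝ) * (2 + log X) := by
  set A : ℝ := log 256 ^ n * ((M + 1)^2 * (57/50)^M)
  set W : ℝ := 8 * log X ^ n * X ^ (3/4:ℝ)
  have hA : 0 ≤ A := by positivity
  have hW : 0 ≤ W := by have := log_nonneg hX; positivity
  calc _ ≤ ∑ p ∈ range (⌈X⌉₊ + 1), ((if (p:ℝ) < 256 then A else 0) + W * (p:ℝ)⁻¹) := by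
        gcongr with p
        by_cases hp : p.Prime ∧ (p:ℝ) < X
        · rw [if_pos hp, ← div_eq_mul_inv]
          exact log_pow_mul_innerSum_le (by exact_mod_cast hp.1.one_le) hp.2.le n M
        · rw [if_neg hp]
          positivity
    _ = ∑ p ∈ range (⌈X⌉₊ + 1), (if (p:ℝ) < 256 then A else 0)
          + W * ∑ p ∈ range (⌈X⌉₊ + 1), (p:ℝ)⁻¹ := by rw [sum_add_distrib, mul_sum]
    _ ≤ 256 * A + W * (2 + log X) := by
        gcongr
        · exact sum_range_ite_lt_le hA _
        · exact sum_range_inv_le_two_add_log hX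

lemma one_add_log_pow_le {X δ : ℝ} (hX : 1 ≤ X) (hδ : 0 < δ) (k : ℕ) :
    (1 + log X)^k ≤ (1 + 1/δ)^k * X^(k*δ) := by
  have hX0 : 0 < X := by linarith
  have h : 1 + log X ≤ (1 + 1/δ) * X^δ := by
    have h1 := one_le_rpow hX hδ.le
    have h2 := log_le_rpow_div hX0.le hδ
    calc 1 + log X ≤ X^δ + X^δ/δ := by linarith
      _ = (1 + 1/δ) * X^δ := by ring
  calc (1 + log X)^k ≤ ((1 + 1/δ) * X^δ)^k := pow_le_pow_left₀ (by linarith [log_nonneg hX]) h k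
    _ = (1 + 1/δ)^k * X^(k*δ) := by
        rw [mul_pow, ← rpow_natCast (X^δ) k, ← rpow_mul hX0.le, mul_comm δ]

lemma fifty_seven_div_fifty_le_exp : (57/50:ℝ) ≤ exp 0.1313 := by
  calc (57/50:ℝ) ≤ (0.1313/64 + 1)^64 := by norm_num
    _ ≤ (exp (0.1313/64))^64 := by gcongr; exact add_one_le_exp _
    _ = exp 0.1313 := by rw [← exp_nat_mul]; norm_num

lemma pow_floor_two_mul_log_le {R : ℝ} (hR : 1 ≤ R) :
    (57/50:ℝ)^⌊2 * log R⌋₊ ≤ R^(0.2626:ℝ) := by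
  have hM : (⌊2 * log R⌋₊ : ℝ) ≤ 2 * log R := Nat.floor_le (by linarith [log_nonneg hR])
  calc (57/50:ℝ)^⌊2 * log R⌋₊ ≤ (exp 0.1313)^⌊2 * log R⌋₊ := by gcongr; exact fifty_seven_div_fifty_le_exp
    _ = exp (⌊2 * log R⌋₊ * 0.1313) := by rw [← exp_nat_mul]
    _ ≤ exp (0.2626 * log R) := exp_le_exp.2 (by linarith)
    _ = R^(0.2626:ℝ) := by rw [rpow_def_of_pos (by linarith), mul_comm]

lemma floor_two_mul_log_add_one_sq_mul_pow_le {R : ℝ} (hR : 1 ≤ R) :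
    ((⌊2 * log R⌋₊ : ℝ) + 1)^2 * (57/50)^⌊2 * log R⌋₊
      ≤ 4 * (1 + 1/0.0037)^2 * R^(0.27:ℝ) := by
  have hM : (⌊2 * log R⌋₊ : ℝ) + 1 ≤ 2 * (1 + log R) := by
    linarith [Nat.floor_le (by linarith [log_nonneg hR] : 0 ≤ 2 * log R), log_nonneg hR]
  calc ((⌊2 * log R⌋₊ : ℝ) + 1)^2 * (57/50)^⌊2 * log R⌋₊
      ≤ 4 * (1 + log R)^2 * R^(0.2626:ℝ) := by
        rw [show 4 * (1 + log R)^2 = (2 * (1 + log R))^2 by ring]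
        gcongr
        exact pow_floor_two_mul_log_le hR
    _ ≤ 4 * ((1 + 1/0.0037)^2 * R^((2:ℕ) * (0.0037:ℝ))) * R^(0.2626:ℝ) := by
        gcongr; exact one_add_log_pow_le hR (by norm_num) 2
    _ = 4 * (1 + 1/0.0037)^2 * R^(0.27:ℝ) := by
        rw [mul_assoc, mul_assoc, ← rpow_add (by linarith)]; norm_num; ring

lemma mul_log_pow_mul_rpow_mul_two_add_log_le {X δ c : ℝ} (hX : 1 ≤ X) (hδ : 0 < δ) (hc : 0 ≤ c)
    (n : ℕ) (a : ℝ) :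
    c * log X ^ n * X ^ a * (2 + log X) ≤ 2 * c * (1 + 1/δ)^(n+1) * X ^ (a + (n+1:ℕ) * δ) := by
  have hL := log_nonneg hX
  have hX0 : 0 < X := by linarith
  calc c * log X ^ n * X ^ a * (2 + log X) ≤ c * (1 + log X)^n * X ^ a * (2 * (1 + log X)) := by
        gcongr <;> linarith
    _ = 2 * c * (1 + log X)^(n+1) * X ^ a := by ring
    _ ≤ 2 * c * ((1 + 1/δ)^(n+1) * X ^ ((n+1:ℕ) * δ)) * X ^ a := by
        gcongr; exact one_add_log_pow_le hX hδ _
    _ = 2 * c * (1 + 1/δ)^(n+1) * X ^ (a + (n+1:ℕ) * δ) := by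
        rw [rpow_add hX0]; ring

theorem stmt5_general (n : ℕ) (σ : ℝ) (hσ : 0 < σ) (ε : ℝ) (hε : 0 < ε) :
    ∃ C > (0:ℝ), ∀ R : ℝ, 2 ≤ R →
      (∑ p ∈ Finset.range (Nat.ceil (R ^ σ) + 1),
        if Nat.Prime p ∧ (p:ℝ) < R ^ σ then
          (Real.log p)^n *
            ∑ m ∈ Finset.range (Nat.floor (2 * Real.log R) + 1),
              (2:ℝ)^m * (m:ℝ) * (p:ℝ) ^ (3*(m:ℝ)/4) * ((p:ℝ) - 1) / ((p:ℝ) + 1)^(m+1)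
        else 0)
      ≤ C * R ^ (max (3*σ/4) 0.27 + ε) := by
  set δ := ε / (σ * (n + 1))
  set C₁ := 256 * log 256 ^ n * (4 * (1 + 1/0.0037)^2)
  set C₂ := 2 * 8 * (1 + 1/δ)^(n+1)
  refine ⟨C₁ + C₂, by positivity, fun R hR => ?_⟩
  have hR1 : 1 ≤ R := by linarith
  have hX : 1 ≤ R ^ σ := one_le_rpow hR1 hσ.le
  have hexp : (R ^ σ) ^ (3/4 + (n+1:ℕ) * δ) = R ^ (3*σ/4 + ε) := by
    rw [← rpow_mul (by linarith)]
    simp only [δ]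
    push_cast
    field_simp
  calc _ ≤ _ := sum_primes_le hX n _
    _ ≤ 256 * (log 256 ^ n * (4 * (1 + 1/0.0037)^2 * R ^ (0.27:ℝ)))
          + C₂ * (R ^ σ) ^ (3/4 + (n+1:ℕ) * δ) :=
        add_le_add (by gcongr 256 * (_ * ?_); exact floor_two_mul_log_add_one_sq_mul_pow_le hR1)
          (mul_log_pow_mul_rpow_mul_two_add_log_le hX (by positivity) (by norm_num) n _)
    _ = C₁ * R ^ (0.27:ℝ) + C₂ * R ^ (3*σ/4 + ε) := by rw [hexp]; ring
    _ ≤ (C₁ + C₂) * R ^ (max (3*σ/4) 0.27 + ε) := by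
        rw [add_mul]
        gcongr
        · linarith [le_max_right (3*σ/4) (0.27:ℝ)]
        · exact le_max_left _ _

theorem stmt5 (n : ℕ) (hn : 0 < n) (σ : ℝ) (hσ : 0 < σ) (ε : ℝ) (hε : 0 < ε) :
    ∃ C > (0:ℝ), ∀ R : ℝ, 2 ≤ R →
      (∑ p ∈ Finset.range (Nat.ceil (R ^ σ) + 1),
        if Nat.Prime p ∧ (p:ℝ) < R ^ σ then
          (Real.log p)^n *
            ∑ m ∈ Finset.range (Nat.floor (2 * Real.log R) + 1),
              (2:ℝ)^m * (m:ℝ) * (p:ℝ) ^ (3*(m:ℝ)/4) * ((p:ℝ) - 1) / ((p:ℝ) + 1)^(m+1)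
        else 0)
      ≤ C * R ^ (max (3*σ/4) 0.27 + ε) :=
  stmt5_general n σ hσ ε hε
end

section
/- Let ψ₁, ψ₂ : ℝ → ℝ be even, infinitely differentiable, compactly supported functions. Then there exist constants C > 0 and R₀ > 1 such that for all real R ≥ R₀: | ∑_{p prime} ((log p)²/(p²·(log R)²))·ψ₁(2 log p/log R)·ψ₂(2 log p/log R) − (ψ₁(0)·ψ₂(0)/(log R)²)·(1 − ∫_1^∞ E(t)·(1 − 2 log t)/t³ dt) | ≤ C/(log R)⁴. -/
open Real MeasureTheory Set Filter

/-- Chebyshev theta function: `θ(t) = ∑_{p ≤ t, p prime} log p`. -/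
noncomputable def chebTheta (t : ℝ) : ℝ :=
  ∑ p ∈ (Finset.range (Nat.floor t + 1)).filter Nat.Prime, Real.log p

/-- Error term in the Prime Number Theorem: `E(t) = θ(t) − t`. -/
noncomputable def chebE (t : ℝ) : ℝ := chebTheta t - t


-- A1: antiderivative for (2 log t - 1)/t^3
lemma hda1 {t : ℝ} (ht : 0 < t) :
    HasDerivAt (fun t : ℝ => -(Real.log t) / t^2) ((2 * Real.log t - 1) / t^3) t := by
  have h : HasDerivAt (fun t : ℝ => -(Real.log t) / t^2) _ t := ((Real.hasDerivAt_log ht.ne').neg).div (hasDerivAt_pow 2 t) (by positivity)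
  convert h using 1
  simp only [Pi.neg_apply]
  field_simp
  ring

-- A2: antiderivative for (1 - 2 log t)/t^2
lemma hda2 {t : ℝ} (ht : 0 < t) :
    HasDerivAt (fun t : ℝ => (2 * Real.log t + 1) / t) ((1 - 2 * Real.log t) / t^2) t := by
  have h : HasDerivAt (fun t : ℝ => (2 * Real.log t + 1) / t) _ t := (((Real.hasDerivAt_log ht.ne').const_mul 2).add_const 1).div (hasDerivAt_id t) (by positivity)
  convert h using 1
  field_simp
  ring

lemma tend1 : Tendsto (fun t : ℝ => -(Real.log t) / t^2) atTop (nhds 0) := by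
  have h := Real.tendsto_pow_log_div_mul_add_atTop 1 0 1 one_ne_zero
  have h2 : Tendsto (fun t : ℝ => (Real.log t / t) * t⁻¹) atTop (nhds 0) := by
    simpa using (h.comp tendsto_id |>.mul tendsto_inv_atTop_zero)
  have := h2.neg
  rw [neg_zero] at this
  refine this.congr' ?_
  filter_upwards [eventually_gt_atTop 0] with t ht
  have htne : t ≠ 0 := ht.ne'
  field_simp
  try ring
  try tauto

lemma tend2 : Tendsto (fun t : ℝ => (2 * Real.log t + 1) / t) atTop (nhds 0) := by
  have h := Real.tendsto_pow_log_div_mul_add_atTop 1 0 1 one_ne_zero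
  have h1 : Tendsto (fun t : ℝ => Real.log t / t) atTop (nhds 0) := by simpa using h
  have := (h1.const_mul 2).add tendsto_inv_atTop_zero
  simp only [mul_zero, add_zero, zero_add] at this
  refine this.congr' ?_
  filter_upwards [eventually_gt_atTop 0] with t ht
  have htne : t ≠ 0 := ht.ne'
  field_simp

lemma log2half : (1:ℝ) < 2 * Real.log 2 := by
  have := Real.log_two_gt_d9
  linarith

lemma integrableOn_of_bound (f : ℝ → ℝ) (c : ℝ)
    (hm : AEStronglyMeasurable f (volume.restrict (Ioi 1)))
    (hb : ∀ t ∈ Ioi (1:ℝ), |f t| ≤ c * t ^ (-(3:ℝ)/2)) : IntegrableOn f (Ioi 1) := by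
  have hg : IntegrableOn (fun t : ℝ => c * t ^ (-(3:ℝ)/2)) (Ioi 1) :=
    (integrableOn_Ioi_rpow_of_lt (by norm_num) one_pos).const_mul c
  refine Integrable.mono' hg hm ?_
  rw [ae_restrict_iff' measurableSet_Ioi]
  filter_upwards with t ht
  exact hb t ht

lemma logrpow {t : ℝ} (ht : 1 ≤ t) : Real.log t ≤ 2 * t ^ ((1:ℝ)/2) := by
  have h := Real.log_le_rpow_div (by linarith : (0:ℝ) ≤ t) (by norm_num : (0:ℝ) < 1/2)
  calc Real.log t ≤ t ^ ((1:ℝ)/2) / (1/2) := h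
    _ = 2 * t ^ ((1:ℝ)/2) := by ring

lemma rpow_half_div_sq {t : ℝ} (ht : 1 ≤ t) : t ^ ((1:ℝ)/2) / t^2 = t ^ (-(3:ℝ)/2) := by
  have ht0 : 0 < t := by linarith
  rw [← Real.rpow_natCast t 2, ← Real.rpow_sub ht0]
  norm_num

lemma integral_aux2 : IntegrableOn (fun t : ℝ => (1 - 2 * Real.log t)/t^2) (Ioi 1) ∧
    ∫ t in Ioi (1:ℝ), (1 - 2 * Real.log t)/t^2 = -1 := by
  have hint : IntegrableOn (fun t : ℝ => (1 - 2 * Real.log t)/t^2) (Ioi 1) := by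
    refine integrableOn_of_bound _ 5 ?_ ?_
    · apply ContinuousOn.aestronglyMeasurable ?_ measurableSet_Ioi
      have hne : ∀ t ∈ Ioi (1:ℝ), t ≠ 0 := fun t ht => by
        have : (1:ℝ) < t := ht; positivity
      exact ContinuousOn.div
        (continuousOn_const.sub (ContinuousOn.mul continuousOn_const (Real.continuousOn_log.mono (fun t ht => hne t ht))))
        (continuousOn_pow 2) (fun t ht => pow_ne_zero 2 (hne t ht))
    · intro t ht
      have ht1 : (1:ℝ) < t := ht
      have ht0 : (0:ℝ) < t := by linarith
      have hlog : 0 ≤ Real.log t := Real.log_nonneg ht1.le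
      have h1 : |1 - 2 * Real.log t| ≤ 1 + 2 * Real.log t := by
        rw [abs_le]; constructor <;> linarith
      have h2 : (1:ℝ) ≤ t ^ ((1:ℝ)/2) := Real.one_le_rpow ht1.le (by norm_num)
      have h3 : Real.log t ≤ 2 * t ^ ((1:ℝ)/2) := logrpow ht1.le
      have h4 : |1 - 2 * Real.log t| / t^2 ≤ (5 * t ^ ((1:ℝ)/2)) / t^2 := by
        apply div_le_div_of_nonneg_right ?_ (by positivity) |>.trans_eq rfl
        linarith
      calc |(1 - 2 * Real.log t)/t^2| = |1 - 2*Real.log t| / t^2 := by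
            rw [abs_div, abs_of_nonneg (by positivity : (0:ℝ) ≤ t^2)]
        _ ≤ (5 * t ^ ((1:ℝ)/2)) / t^2 := h4
        _ = 5 * (t ^ ((1:ℝ)/2) / t^2) := by ring
        _ = 5 * t ^ (-(3:ℝ)/2) := by rw [rpow_half_div_sq ht1.le]
  refine ⟨hint, ?_⟩
  have := integral_Ioi_of_hasDerivAt_of_tendsto (a := 1)
    (f := fun t : ℝ => (2 * Real.log t + 1)/t) (f' := fun t : ℝ => (1 - 2 * Real.log t)/t^2)
    ?_ ?_ hint tend2
  · rw [this]; norm_num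
  · exact ((hda2 one_pos).continuousAt).continuousWithinAt
  · intro x hx; exact hda2 (lt_trans one_pos hx)

lemma integral_aux1 {a : ℝ} (ha : 2 ≤ a) :
    IntegrableOn (fun t : ℝ => (2 * Real.log t - 1)/t^3) (Ioi a) ∧
    ∫ t in Ioi a, (2 * Real.log t - 1)/t^3 = Real.log a / a^2 := by
  have ha0 : (0:ℝ) < a := by linarith
  have hderiv : ∀ x ∈ Ioi a, HasDerivAt (fun t : ℝ => -(Real.log t)/t^2)
      ((2 * Real.log x - 1)/x^3) x := fun x hx => hda1 (lt_trans ha0 hx)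
  have hpos : ∀ x ∈ Ioi a, 0 ≤ (2 * Real.log x - 1)/x^3 := by
    intro x hx
    have hx2 : (2:ℝ) ≤ x := le_trans ha (le_of_lt hx)
    have : Real.log 2 ≤ Real.log x := Real.log_le_log (by norm_num) hx2
    have h2 := log2half
    have hx0 : (0:ℝ) < x := by linarith
    apply div_nonneg (by linarith) (by positivity)
  have hcont : ContinuousWithinAt (fun t : ℝ => -(Real.log t)/t^2) (Ici a) a :=
    ((hda1 ha0).continuousAt).continuousWithinAt
  refine ⟨integrableOn_Ioi_deriv_of_nonneg hcont hderiv hpos tend1, ?_⟩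
  rw [integral_Ioi_of_hasDerivAt_of_nonneg hcont hderiv hpos tend1]
  rw [zero_sub, neg_div, neg_neg]

lemma summable_base {k : ℕ} (hk1 : 1 ≤ k) (hk : k ≤ 4) :
    Summable (fun n : ℕ => (Real.log n)^k / (n:ℝ)^2) := by
  have hg : Summable (fun n : ℕ => (4096:ℝ) * (n:ℝ) ^ (-(3:ℝ)/2)) :=
    (Real.summable_nat_rpow.mpr (by norm_num)).mul_left 4096
  refine hg.of_nonneg_of_le (fun n => ?_) (fun n => ?_)
  · rcases Nat.eq_zero_or_pos n with rfl | hn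
    · simp [zero_pow (by omega : k ≠ 0)]
    · have h1 : (1:ℝ) ≤ n := by exact_mod_cast hn
      have := Real.log_nonneg h1
      positivity
  · rcases Nat.eq_zero_or_pos n with rfl | hn
    · simp [Real.zero_rpow (by norm_num : (-(3:ℝ)/2) ≠ 0), zero_pow (by omega : k ≠ 0)]
    · have h1 : (1:ℝ) ≤ (n:ℝ) := by exact_mod_cast hn
      have h0 : (0:ℝ) < n := by linarith
      have hlog : Real.log n ≤ 8 * (n:ℝ) ^ ((1:ℝ)/8) := by
        have := Real.log_le_rpow_div (le_of_lt h0) (by norm_num : (0:ℝ) < 1/8)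
        calc Real.log n ≤ (n:ℝ) ^ ((1:ℝ)/8) / (1/8) := this
          _ = 8 * (n:ℝ) ^ ((1:ℝ)/8) := by ring
      have hlog0 : 0 ≤ Real.log n := Real.log_nonneg h1
      have hp : (Real.log n)^k ≤ (8 * (n:ℝ) ^ ((1:ℝ)/8))^k :=
        pow_le_pow_left₀ hlog0 hlog k
      have hrp : ((n:ℝ) ^ ((1:ℝ)/8))^k = (n:ℝ) ^ ((k:ℝ)/8) := by
        rw [← Real.rpow_natCast ((n:ℝ) ^ ((1:ℝ)/8)) k, ← Real.rpow_mul (le_of_lt h0)]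
        congr 1
        ring
      have h8k : (8:ℝ)^k ≤ 4096 := by
        calc (8:ℝ)^k ≤ (8:ℝ)^4 := pow_le_pow_right₀ (by norm_num) hk
          _ = 4096 := by norm_num
      have hk8 : (n:ℝ) ^ ((k:ℝ)/8) ≤ (n:ℝ) ^ ((1:ℝ)/2) := by
        apply Real.rpow_le_rpow_of_exponent_le h1
        have : (k:ℝ) ≤ 4 := by exact_mod_cast hk
        linarith
      have hfinal : (Real.log n)^k ≤ 4096 * (n:ℝ) ^ ((1:ℝ)/2) := by
        calc (Real.log n)^k ≤ (8 * (n:ℝ) ^ ((1:ℝ)/8))^k := hp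
          _ = (8:ℝ)^k * ((n:ℝ) ^ ((1:ℝ)/8))^k := mul_pow 8 _ k
          _ = (8:ℝ)^k * (n:ℝ) ^ ((k:ℝ)/8) := by rw [hrp]
          _ ≤ 4096 * (n:ℝ) ^ ((1:ℝ)/2) := by
              apply mul_le_mul h8k hk8 (by positivity) (by norm_num)
      calc (Real.log n)^k / (n:ℝ)^2 ≤ 4096 * (n:ℝ) ^ ((1:ℝ)/2) / (n:ℝ)^2 :=
            div_le_div_of_nonneg_right hfinal (by positivity) |>.trans_eq rfl
        _ = 4096 * ((n:ℝ) ^ ((1:ℝ)/2) / (n:ℝ)^2) := by ring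
        _ = 4096 * (n:ℝ) ^ (-(3:ℝ)/2) := by rw [rpow_half_div_sq h1]

lemma chebTheta_measurable : Measurable chebTheta := by
  have : chebTheta = (fun n : ℕ => ∑ p ∈ (Finset.range (n + 1)).filter Nat.Prime, Real.log p)
      ∘ (Nat.floor : ℝ → ℕ) := rfl
  rw [this]
  exact (measurable_from_top).comp Nat.measurable_floor

lemma chebTheta_nonneg (t : ℝ) : 0 ≤ chebTheta t := by
  apply Finset.sum_nonneg
  intro p hp
  simp only [Finset.mem_filter, Finset.mem_range] at hp
  have h2 : 2 ≤ p := hp.2.two_le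
  apply Real.log_nonneg
  exact_mod_cast Nat.one_le_iff_ne_zero.mpr (by omega)

lemma chebTheta_le {t : ℝ} (ht : 1 ≤ t) : chebTheta t ≤ 2 * t * Real.log t := by
  have ht0 : (0:ℝ) ≤ t := by linarith
  have hbound : ∀ p ∈ (Finset.range (Nat.floor t + 1)).filter Nat.Prime,
      Real.log p ≤ Real.log t := by
    intro p hp
    simp only [Finset.mem_filter, Finset.mem_range] at hp
    have h2 : 2 ≤ p := hp.2.two_le
    have hle : p ≤ Nat.floor t := by omega
    have : (p:ℝ) ≤ t := le_trans (by exact_mod_cast hle) (Nat.floor_le ht0)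
    exact Real.log_le_log (by exact_mod_cast (by omega : 0 < p)) this
  calc chebTheta t ≤ ∑ _p ∈ (Finset.range (Nat.floor t + 1)).filter Nat.Prime, Real.log t :=
        Finset.sum_le_sum hbound
    _ = ((Finset.range (Nat.floor t + 1)).filter Nat.Prime).card * Real.log t := by
        rw [Finset.sum_const, nsmul_eq_mul]
    _ ≤ (Nat.floor t + 1 : ℕ) * Real.log t := by
        apply mul_le_mul_of_nonneg_right ?_ (Real.log_nonneg ht)
        exact_mod_cast Finset.card_filter_le _ _ |>.trans (by simp)
    _ ≤ (t + 1) * Real.log t := by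
        apply mul_le_mul_of_nonneg_right ?_ (Real.log_nonneg ht)
        push_cast
        have := Nat.floor_le ht0
        linarith
    _ ≤ 2 * t * Real.log t := by
        apply mul_le_mul_of_nonneg_right ?_ (Real.log_nonneg ht)
        linarith

lemma theta_integrand_integrable :
    IntegrableOn (fun t : ℝ => chebTheta t * ((2 * Real.log t - 1)/t^3)) (Ioi 1) := by
  refine integrableOn_of_bound _ 272 ?_ ?_
  · refine Measurable.aestronglyMeasurable ?_
    exact (chebTheta_measurable.mul ((((measurable_const.mul Real.measurable_log).sub
      measurable_const).div ((measurable_id.pow_const 3)))))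
  · intro t ht
    have ht1 : (1:ℝ) < t := ht
    have ht0 : (0:ℝ) < t := by linarith
    have hlog0 : 0 ≤ Real.log t := Real.log_nonneg ht1.le
    have hl8 : Real.log t ≤ 8 * t ^ ((1:ℝ)/8) := by
      have := Real.log_le_rpow_div ht0.le (by norm_num : (0:ℝ) < 1/8)
      calc Real.log t ≤ t ^ ((1:ℝ)/8) / (1/8) := this
        _ = 8 * t ^ ((1:ℝ)/8) := by ring
    have h18 : (1:ℝ) ≤ t ^ ((1:ℝ)/8) := Real.one_le_rpow ht1.le (by norm_num)
    have habs : |2 * Real.log t - 1| ≤ 17 * t ^ ((1:ℝ)/8) := by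
      rw [abs_le]
      constructor <;> nlinarith
    have hth : |chebTheta t| ≤ 16 * t * t ^ ((1:ℝ)/8) := by
      rw [abs_of_nonneg (chebTheta_nonneg t)]
      calc chebTheta t ≤ 2 * t * Real.log t := chebTheta_le ht1.le
        _ ≤ 2 * t * (8 * t ^ ((1:ℝ)/8)) := by nlinarith
        _ = 16 * t * t ^ ((1:ℝ)/8) := by ring
    have hrw : t * (t ^ ((1:ℝ)/8) * t ^ ((1:ℝ)/8)) / t^3 = t ^ (-(7:ℝ)/4) := by
      have h1 : t ^ ((1:ℝ)/8) * t ^ ((1:ℝ)/8) = t ^ ((1:ℝ)/4) := by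
        rw [← Real.rpow_add ht0]; norm_num
      have h2 : t * t ^ ((1:ℝ)/4) = t ^ ((5:ℝ)/4) := by
        nth_rewrite 1 [← Real.rpow_one t]
        rw [← Real.rpow_add ht0]; norm_num
      rw [h1, h2, ← Real.rpow_natCast t 3, ← Real.rpow_sub ht0]
      norm_num
    calc |chebTheta t * ((2 * Real.log t - 1)/t^3)|
        = |chebTheta t| * |2 * Real.log t - 1| / t^3 := by
          rw [abs_mul, abs_div, abs_of_nonneg (by positivity : (0:ℝ) ≤ t^3), mul_div_assoc]
      _ ≤ (16 * t * t ^ ((1:ℝ)/8)) * (17 * t ^ ((1:ℝ)/8)) / t^3 := by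
          apply div_le_div_of_nonneg_right ?_ (by positivity) |>.trans_eq rfl
          apply mul_le_mul hth habs (abs_nonneg _) (by positivity)
      _ = 272 * (t * (t ^ ((1:ℝ)/8) * t ^ ((1:ℝ)/8)) / t^3) := by ring
      _ = 272 * t ^ (-(7:ℝ)/4) := by rw [hrw]
      _ ≤ 272 * t ^ (-(3:ℝ)/2) := by
          apply mul_le_mul_of_nonneg_left ?_ (by norm_num)
          apply Real.rpow_le_rpow_of_exponent_le ht1.le
          norm_num

lemma summable_ifprime {k : ℕ} (hk1 : 1 ≤ k) (hk : k ≤ 4) :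
    Summable (fun n : ℕ => if Nat.Prime n then (Real.log n)^k/(n:ℝ)^2 else 0) := by
  refine (summable_base hk1 hk).of_nonneg_of_le (fun n => ?_) (fun n => ?_)
  · by_cases h : Nat.Prime n
    · simp only [h, if_true]
      have h1 : (1:ℝ) ≤ n := by exact_mod_cast h.two_le.trans' (by norm_num)
      have := Real.log_nonneg h1
      positivity
    · simp [h]
  · by_cases h : Nat.Prime n
    · simp [h]
    · simp only [h, if_false]
      rcases Nat.eq_zero_or_pos n with rfl | hn
      · simp
      · have h1 : (1:ℝ) ≤ n := by exact_mod_cast hn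
        have := Real.log_nonneg h1
        positivity

lemma chebTheta_eq_tsum {t : ℝ} (ht : 0 ≤ t) :
    chebTheta t = ∑' p : ℕ, (if Nat.Prime p ∧ (p:ℝ) ≤ t then Real.log p else 0) := by
  have h0 : ∀ p ∉ (Finset.range (Nat.floor t + 1)).filter Nat.Prime,
      (if Nat.Prime p ∧ (p:ℝ) ≤ t then Real.log p else 0) = 0 := by
    intro p hp
    rw [if_neg]
    rintro ⟨hp1, hp2⟩
    apply hp
    simp only [Finset.mem_filter, Finset.mem_range]
    exact ⟨Nat.lt_succ_of_le (Nat.le_floor hp2), hp1⟩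
  rw [tsum_eq_sum h0]
  apply Finset.sum_congr rfl
  intro p hp
  simp only [Finset.mem_filter, Finset.mem_range] at hp
  have hle : (p:ℝ) ≤ t := le_trans (by exact_mod_cast Nat.lt_succ_iff.mp hp.1) (Nat.floor_le ht)
  rw [if_pos ⟨hp.2, hle⟩]

lemma theta_integral :
    ∫ t in Ioi (1:ℝ), chebTheta t * ((2 * Real.log t - 1)/t^3)
      = ∑' p : ℕ, (if Nat.Prime p then (Real.log p)^2/(p:ℝ)^2 else 0) := by
  set F : ℕ → ℝ → ℝ := fun p t =>
    (if Nat.Prime p ∧ (p:ℝ) ≤ t then Real.log p else 0) * ((2 * Real.log t - 1)/t^3) with hF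
  have hnonprime : ∀ p : ℕ, ¬ Nat.Prime p → F p = fun _ => 0 := by
    intro p hp; funext t; simp [hF, hp]
  have hFeq : ∀ p : ℕ, Nat.Prime p → F p =
      (Ici ((p:ℝ))).indicator (fun t => Real.log p * ((2 * Real.log t - 1)/t^3)) := by
    intro p hp; funext t
    by_cases h : (p:ℝ) ≤ t
    · simp [hF, Set.indicator_of_mem (mem_Ici.mpr h), hp, h]
    · simp [hF, Set.indicator_of_notMem (fun hc => h (mem_Ici.mp hc)), hp, h]
  have hp2 : ∀ p : ℕ, Nat.Prime p → (2:ℝ) ≤ (p:ℝ) := fun p hp => by exact_mod_cast hp.two_le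
  have hinter : ∀ p : ℕ, Nat.Prime p → Ici ((p:ℝ)) ∩ Ioi 1 = Ici ((p:ℝ)) := by
    intro p hp
    apply Set.inter_eq_left.mpr
    intro x hx
    exact mem_Ioi.mpr (lt_of_lt_of_le (by linarith [hp2 p hp]) (mem_Ici.mp hx))
  have hint : ∀ p : ℕ, Integrable (F p) (volume.restrict (Ioi 1)) := by
    intro p
    by_cases hp : Nat.Prime p
    · rw [hFeq p hp, integrable_indicator_iff measurableSet_Ici]
      unfold IntegrableOn
      rw [Measure.restrict_restrict measurableSet_Ici, hinter p hp]
      show IntegrableOn _ (Ici ((p:ℝ))) volume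
      rw [integrableOn_Ici_iff_integrableOn_Ioi]
      exact ((integral_aux1 (hp2 p hp)).1).const_mul _
    · rw [hnonprime p hp]; exact integrable_zero _ _ _
  have hval : ∀ p : ℕ, ∫ t in Ioi (1:ℝ), F p t
      = (if Nat.Prime p then (Real.log p)^2/(p:ℝ)^2 else 0) := by
    intro p
    by_cases hp : Nat.Prime p
    · have : (fun t => F p t) = F p := rfl
      rw [this, hFeq p hp, integral_indicator measurableSet_Ici,
        Measure.restrict_restrict measurableSet_Ici, hinter p hp,
        integral_Ici_eq_integral_Ioi, MeasureTheory.integral_const_mul, (integral_aux1 (hp2 p hp)).2,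
        if_pos hp]
      field_simp
    · rw [if_neg hp]
      have : (fun t => F p t) = F p := rfl
      rw [this, hnonprime p hp]
      simp
  have hFnonneg : ∀ p : ℕ, ∀ t ∈ Ioi (1:ℝ), 0 ≤ F p t := by
    intro p t ht
    by_cases hc : Nat.Prime p ∧ (p:ℝ) ≤ t
    · simp only [hF, if_pos hc]
      have h2t : (2:ℝ) ≤ t := le_trans (hp2 p hc.1) hc.2
      have hlt : Real.log 2 ≤ Real.log t := Real.log_le_log (by norm_num) h2t
      have := log2half
      have ht0 : (0:ℝ) < t := by linarith
      have hlp : (0:ℝ) ≤ Real.log p := Real.log_nonneg (by linarith [hp2 p hc.1])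
      apply mul_nonneg hlp
      apply div_nonneg (by linarith) (by positivity)
    · simp [hF, if_neg hc]
  have hnorm : ∀ p : ℕ, ∫ t in Ioi (1:ℝ), ‖F p t‖
      = (if Nat.Prime p then (Real.log p)^2/(p:ℝ)^2 else 0) := by
    intro p
    rw [← hval p]
    apply setIntegral_congr_fun measurableSet_Ioi
    intro t ht
    exact Real.norm_of_nonneg (hFnonneg p t ht)
  have hsum : Summable (fun p : ℕ => ∫ t in Ioi (1:ℝ), ‖F p t‖) := by
    rw [show (fun p : ℕ => ∫ t in Ioi (1:ℝ), ‖F p t‖)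
      = (fun p : ℕ => if Nat.Prime p then (Real.log p)^2/(p:ℝ)^2 else 0) from funext hnorm]
    exact summable_ifprime (by norm_num) (by norm_num)
  have hswap := integral_tsum_of_summable_integral_norm hint hsum
  rw [show (fun p : ℕ => ∫ t in Ioi (1:ℝ), F p t)
    = (fun p : ℕ => if Nat.Prime p then (Real.log p)^2/(p:ℝ)^2 else 0) from funext hval] at hswap
  rw [hswap]
  apply setIntegral_congr_fun measurableSet_Ioi
  intro t ht
  have ht1 : (1:ℝ) < t := ht
  show chebTheta t * ((2 * Real.log t - 1)/t^3) = ∑' p : ℕ, F p t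
  rw [chebTheta_eq_tsum (by linarith : (0:ℝ) ≤ t)]
  exact tsum_mul_right.symm

lemma E_pointwise {t : ℝ} (ht : t ≠ 0) :
    chebE t * (1 - 2 * Real.log t) / t^3
      = -(chebTheta t * ((2 * Real.log t - 1)/t^3)) - (1 - 2 * Real.log t)/t^2 := by
  unfold chebE
  field_simp
  ring

lemma E_integrable :
    IntegrableOn (fun t : ℝ => chebE t * (1 - 2 * Real.log t) / t^3) (Ioi 1) := by
  apply IntegrableOn.congr_fun (theta_integrand_integrable.neg.sub integral_aux2.1)
    ?_ measurableSet_Ioi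
  intro t ht
  have ht1 : (1:ℝ) < t := ht
  exact (E_pointwise (by linarith)).symm

lemma E_integral :
    ∫ t in Ioi (1:ℝ), chebE t * (1 - 2 * Real.log t) / t^3
      = 1 - ∑' p : ℕ, (if Nat.Prime p then (Real.log p)^2/(p:ℝ)^2 else 0) := by
  rw [setIntegral_congr_fun measurableSet_Ioi (f := fun t => chebE t * (1 - 2 * Real.log t) / t^3)
    (g := fun t => -(chebTheta t * ((2 * Real.log t - 1)/t^3)) - (1 - 2 * Real.log t)/t^2) ?_]
  · have h := integral_sub (f := fun t : ℝ => -(chebTheta t * ((2 * Real.log t - 1)/t^3)))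
      (g := fun t : ℝ => (1 - 2 * Real.log t)/t^2) ?_ integral_aux2.1
    · rw [h, integral_neg, theta_integral, integral_aux2.2]
      ring
    · exact theta_integrand_integrable.neg
  · intro t ht
    have ht1 : (1:ℝ) < t := ht
    exact E_pointwise (by linarith)

lemma quad_bound (ψ : ℝ → ℝ) (heven : ∀ x : ℝ, ψ (-x) = ψ x)
    (hs : ContDiff ℝ (⊤ : ℕ∞) ψ) (hc : HasCompactSupport ψ) :
    ∃ B : ℝ, 0 ≤ B ∧ ∀ x : ℝ, |ψ x - ψ 0| ≤ B * x^2 := by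
  have hs' : ContDiff ℝ ((⊤:ℕ∞):WithTop ℕ∞) ψ := hs.of_le (by simp)
  have hd : Differentiable ℝ ψ := hs.differentiable (by simp)
  have hd1smooth : ContDiff ℝ ((⊤:ℕ∞):WithTop ℕ∞) (deriv ψ) := (contDiff_infty_iff_deriv.mp hs').2
  have hd1 : Differentiable ℝ (deriv ψ) := hd1smooth.differentiable (by simp)
  have hd2cont : Continuous (deriv (deriv ψ)) :=
    ((contDiff_infty_iff_deriv.mp hd1smooth).2).continuous
  have hd2supp : HasCompactSupport (deriv (deriv ψ)) := (hc.deriv).deriv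
  obtain ⟨C, hC⟩ := hd2supp.exists_bound_of_continuous hd2cont
  have hC0 : 0 ≤ C := le_trans (norm_nonneg _) (hC 0)
  -- deriv ψ 0 = 0
  have hodd : deriv ψ 0 = 0 := by
    have h1 : HasDerivAt ψ (deriv ψ 0) 0 := (hd 0).hasDerivAt
    have h2 : HasDerivAt (fun x : ℝ => ψ (-x)) (-(deriv ψ 0)) 0 := by
      have h0 : HasDerivAt ψ (deriv ψ 0) (-(0:ℝ)) := by simpa using h1
      exact (h0.comp 0 (hasDerivAt_neg 0)).congr_deriv (by simp)
    have h3 : (fun x : ℝ => ψ (-x)) = ψ := funext heven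
    rw [h3] at h2
    have := h1.unique h2
    linarith
  have hlip : ∀ x : ℝ, |deriv ψ x| ≤ C * |x| := by
    intro x
    have := Convex.norm_image_sub_le_of_norm_deriv_le (s := Set.univ) (f := deriv ψ)
      (fun y _ => hd1 y) (fun y _ => hC y) convex_univ
      (Set.mem_univ 0) (Set.mem_univ x)
    simp only [hodd, sub_zero, Real.norm_eq_abs] at this
    simpa using this
  refine ⟨C, hC0, fun x => ?_⟩
  have hseg : ∀ y ∈ Set.uIcc (0:ℝ) x, |deriv ψ y| ≤ C * |x| := by
    intro y hy
    refine (hlip y).trans (mul_le_mul_of_nonneg_left ?_ hC0)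
    rcases le_total 0 x with h | h
    · rw [Set.uIcc_of_le h] at hy
      rw [abs_of_nonneg hy.1, abs_of_nonneg h]; exact hy.2
    · rw [Set.uIcc_of_ge h] at hy
      rw [abs_of_nonpos hy.2, abs_of_nonpos h]; linarith [hy.1]
  have hmvt := Convex.norm_image_sub_le_of_norm_deriv_le (s := Set.uIcc (0:ℝ) x) (f := ψ)
    (fun y _ => hd y) hseg (convex_uIcc 0 x)
    Set.left_mem_uIcc Set.right_mem_uIcc
  simp only [Real.norm_eq_abs, sub_zero] at hmvt
  calc |ψ x - ψ 0| ≤ C * |x| * |x| := hmvt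
    _ = C * x^2 := by rw [mul_assoc, ← abs_mul, ← pow_two, abs_of_nonneg (sq_nonneg x)]

set_option maxHeartbeats 2000000 in
theorem stmt9 (ψ₁ ψ₂ : ℝ → ℝ)
    (heven₁ : ∀ x : ℝ, ψ₁ (-x) = ψ₁ x) (heven₂ : ∀ x : ℝ, ψ₂ (-x) = ψ₂ x)
    (hsmooth₁ : ContDiff ℝ (⊤ : ℕ∞) ψ₁) (hsmooth₂ : ContDiff ℝ (⊤ : ℕ∞) ψ₂)
    (hsupp₁ : HasCompactSupport ψ₁) (hsupp₂ : HasCompactSupport ψ₂) :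
    ∃ C > (0:ℝ), ∃ R₀ > (1:ℝ), ∀ R : ℝ, R₀ ≤ R →
      |(∑' p : ℕ, if Nat.Prime p then
            ((Real.log p)^2 / ((p:ℝ)^2 * (Real.log R)^2)) *
              ψ₁ (2 * Real.log p / Real.log R) * ψ₂ (2 * Real.log p / Real.log R)
          else 0)
        - (ψ₁ 0 * ψ₂ 0 / (Real.log R)^2) *
            (1 - ∫ t in Set.Ioi (1:ℝ), chebE t * (1 - 2 * Real.log t) / t^3)|
      ≤ C / (Real.log R)^4 := by
  set ψ : ℝ → ℝ := fun x => ψ₁ x * ψ₂ x with hψ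
  have hψeven : ∀ x : ℝ, ψ (-x) = ψ x := fun x => by simp [hψ, heven₁ x, heven₂ x]
  have hψsmooth : ContDiff ℝ (⊤ : ℕ∞) ψ := hsmooth₁.mul hsmooth₂
  have hψsupp : HasCompactSupport ψ := hsupp₁.mul_right
  obtain ⟨B, hB0, hB⟩ := quad_bound ψ hψeven hψsmooth hψsupp
  obtain ⟨Cψ, hCψ⟩ := hψsupp.exists_bound_of_continuous hψsmooth.continuous
  set S2 : ℝ := ∑' p : ℕ, (if Nat.Prime p then (Real.log p)^2/(p:ℝ)^2 else 0) with hS2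
  set S4 : ℝ := ∑' p : ℕ, (if Nat.Prime p then (Real.log p)^4/(p:ℝ)^2 else 0) with hS4
  have hs2 : Summable (fun p : ℕ => if Nat.Prime p then (Real.log p)^2/(p:ℝ)^2 else 0) :=
    summable_ifprime (by norm_num) (by norm_num)
  have hs4 : Summable (fun p : ℕ => if Nat.Prime p then (Real.log p)^4/(p:ℝ)^2 else 0) :=
    summable_ifprime (by norm_num) (by norm_num)
  have hS4nonneg : 0 ≤ S4 := by
    apply tsum_nonneg
    intro p
    by_cases hp : Nat.Prime p
    · simp only [hp, if_true]
      have h1 : (1:ℝ) ≤ (p:ℝ) := by exact_mod_cast hp.two_le.trans' (by norm_num)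
      have := Real.log_nonneg h1
      positivity
    · simp [hp]
  refine ⟨4 * B * S4 + 1, by positivity, 2, by norm_num, fun R hR => ?_⟩
  set L : ℝ := Real.log R with hL
  have hL0 : 0 < L := Real.log_pos (by linarith)
  have hLne : L ≠ 0 := hL0.ne'
  -- rewrite the integral
  rw [E_integral]
  -- pointwise rewriting of the tsum
  have hA : ∀ p : ℕ, (if Nat.Prime p then
        ((Real.log p)^2 / ((p:ℝ)^2 * L^2)) *
          ψ₁ (2 * Real.log p / L) * ψ₂ (2 * Real.log p / L) else 0)
      = (1/L^2) * (if Nat.Prime p then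
        (Real.log p)^2/(p:ℝ)^2 * ψ (2 * Real.log p / L) else 0) := by
    intro p
    by_cases hp : Nat.Prime p
    · simp only [hp, if_true, hψ]
      have hpne : ((p:ℝ)) ≠ 0 := by
        have : (2:ℝ) ≤ (p:ℝ) := by exact_mod_cast hp.two_le
        linarith
      field_simp
    · simp [hp]
  rw [tsum_congr hA, tsum_mul_left]
  -- rewrite the main term
  have hmain : (ψ₁ 0 * ψ₂ 0 / L^2) * (1 - (1 - S2))
      = (1/L^2) * ∑' p : ℕ, (if Nat.Prime p then
          (Real.log p)^2/(p:ℝ)^2 * ψ 0 else 0) := by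
    have h1 : ∀ p : ℕ, (if Nat.Prime p then (Real.log p)^2/(p:ℝ)^2 * ψ 0 else 0)
        = (if Nat.Prime p then (Real.log p)^2/(p:ℝ)^2 else 0) * ψ 0 := by
      intro p; by_cases hp : Nat.Prime p <;> simp [hp]
    rw [tsum_congr h1, tsum_mul_right, ← hS2, hψ]
    simp only []
    field_simp
    try ring
  rw [hmain]
  rw [← mul_sub]
  -- difference of sums
  have hsumA : Summable (fun p : ℕ => if Nat.Prime p then
      (Real.log p)^2/(p:ℝ)^2 * ψ (2 * Real.log p / L) else 0) := by
    apply Summable.of_norm_bounded (hs2.mul_right Cψ)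
    intro p
    by_cases hp : Nat.Prime p
    · simp only [hp, if_true, Real.norm_eq_abs, abs_mul]
      have h1 : (1:ℝ) ≤ (p:ℝ) := by exact_mod_cast hp.two_le.trans' (by norm_num)
      have hl0 := Real.log_nonneg h1
      have hd : |(Real.log p)^2/(p:ℝ)^2| = (Real.log p)^2/(p:ℝ)^2 := by
        apply abs_of_nonneg; positivity
      rw [hd]
      apply mul_le_mul_of_nonneg_left ?_ (by positivity)
      calc |ψ (2 * Real.log p / L)| = ‖ψ (2 * Real.log p / L)‖ := rfl
        _ ≤ Cψ := hCψ _
    · simp [hp]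
  have hsumB : Summable (fun p : ℕ => if Nat.Prime p then
      (Real.log p)^2/(p:ℝ)^2 * ψ 0 else 0) := by
    have h1 : ∀ p : ℕ, (if Nat.Prime p then (Real.log p)^2/(p:ℝ)^2 * ψ 0 else 0)
        = (if Nat.Prime p then (Real.log p)^2/(p:ℝ)^2 else 0) * ψ 0 := by
      intro p; by_cases hp : Nat.Prime p <;> simp [hp]
    rw [show (fun p : ℕ => if Nat.Prime p then (Real.log p)^2/(p:ℝ)^2 * ψ 0 else 0)
      = fun p => (if Nat.Prime p then (Real.log p)^2/(p:ℝ)^2 else 0) * ψ 0 from funext h1]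
    exact hs2.mul_right _
  rw [← Summable.tsum_sub hsumA hsumB]
  -- bound the summed difference
  have hgb : ∀ p : ℕ, |(if Nat.Prime p then
        (Real.log p)^2/(p:ℝ)^2 * ψ (2 * Real.log p / L) else 0)
      - (if Nat.Prime p then (Real.log p)^2/(p:ℝ)^2 * ψ 0 else 0)|
      ≤ (4*B/L^2) * (if Nat.Prime p then (Real.log p)^4/(p:ℝ)^2 else 0) := by
    intro p
    by_cases hp : Nat.Prime p
    · simp only [hp, if_true]
      rw [← mul_sub, abs_mul]
      have h1 : (1:ℝ) ≤ (p:ℝ) := by exact_mod_cast hp.two_le.trans' (by norm_num)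
      have hl0 := Real.log_nonneg h1
      have hd : |(Real.log p)^2/(p:ℝ)^2| = (Real.log p)^2/(p:ℝ)^2 := by
        apply abs_of_nonneg; positivity
      rw [hd]
      calc (Real.log p)^2/(p:ℝ)^2 * |ψ (2 * Real.log p / L) - ψ 0|
          ≤ (Real.log p)^2/(p:ℝ)^2 * (B * (2 * Real.log p / L)^2) := by
            apply mul_le_mul_of_nonneg_left (hB _) (by positivity)
        _ = (4*B/L^2) * ((Real.log p)^4/(p:ℝ)^2) := by
            field_simp
            ring
    · simp only [hp, if_false, sub_zero, abs_zero, mul_zero]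
      exact le_refl 0
  have habs_sum : Summable (fun p : ℕ => |(if Nat.Prime p then
        (Real.log p)^2/(p:ℝ)^2 * ψ (2 * Real.log p / L) else 0)
      - (if Nat.Prime p then (Real.log p)^2/(p:ℝ)^2 * ψ 0 else 0)|) := by
    apply Summable.of_nonneg_of_le (fun p => abs_nonneg _) hgb
    exact hs4.mul_left _
  have hbound : |∑' p : ℕ, ((if Nat.Prime p then
        (Real.log p)^2/(p:ℝ)^2 * ψ (2 * Real.log p / L) else 0)
      - (if Nat.Prime p then (Real.log p)^2/(p:ℝ)^2 * ψ 0 else 0))|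
      ≤ (4*B/L^2) * S4 := by
    calc |∑' p : ℕ, ((if Nat.Prime p then
          (Real.log p)^2/(p:ℝ)^2 * ψ (2 * Real.log p / L) else 0)
        - (if Nat.Prime p then (Real.log p)^2/(p:ℝ)^2 * ψ 0 else 0))|
        ≤ ∑' p : ℕ, |(if Nat.Prime p then
          (Real.log p)^2/(p:ℝ)^2 * ψ (2 * Real.log p / L) else 0)
        - (if Nat.Prime p then (Real.log p)^2/(p:ℝ)^2 * ψ 0 else 0)| := by
          have h := norm_tsum_le_tsum_norm (f := fun p : ℕ => (if Nat.Prime p then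
            (Real.log p)^2/(p:ℝ)^2 * ψ (2 * Real.log p / L) else 0)
            - (if Nat.Prime p then (Real.log p)^2/(p:ℝ)^2 * ψ 0 else 0)) ?_
          · simpa [Real.norm_eq_abs] using h
          · simpa [Real.norm_eq_abs] using habs_sum
      _ ≤ ∑' p : ℕ, (4*B/L^2) * (if Nat.Prime p then (Real.log p)^4/(p:ℝ)^2 else 0) :=
          Summable.tsum_le_tsum hgb habs_sum (hs4.mul_left _)
      _ = (4*B/L^2) * S4 := by rw [tsum_mul_left, hS4]
  rw [abs_mul]
  have h1L : |1/L^2| = 1/L^2 := abs_of_nonneg (by positivity)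
  rw [h1L]
  calc 1/L^2 * |∑' p : ℕ, ((if Nat.Prime p then
        (Real.log p)^2/(p:ℝ)^2 * ψ (2 * Real.log p / L) else 0)
      - (if Nat.Prime p then (Real.log p)^2/(p:ℝ)^2 * ψ 0 else 0))|
      ≤ 1/L^2 * ((4*B/L^2) * S4) := by
        apply mul_le_mul_of_nonneg_left hbound (by positivity)
    _ = (4*B*S4)/L^4 := by
        field_simp
        try ring
        try tauto
    _ ≤ (4*B*S4 + 1)/L^4 := by
        apply div_le_div_of_nonneg_right ?_ (by positivity) |>.trans_eq rfl
        linarith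
end

section
/- For every real number x > 1, the series ∑_{i=2}^∞ C_i·x^{i−1}·(x−1)/(x+1)^{2i} converges and equals (x−1)/x² − (x−1)/(x+1)²; equivalently, (−3x − 1)/(x(x+1)²) + ∑_{i=2}^∞ C_i·x^{i−1}·(x−1)/(x+1)^{2i} = −1/x². -/
/-!
On `[0, 1/4)` the Catalan generating function `S u = ∑ Cₙ uⁿ` converges (as `Cₙ ≤ 4ⁿ`) and the
Catalan recurrence, read through the Cauchy product, gives `u S² = S - 1`. Of the two roots, `u S`
is the one `≤ 1/2`: `u ↦ u S u` is monotone while the roots `1/2 ± √(1/4 - u)` above `1/2`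
decrease, so `u S u = (1 - √(1 - 4u)) / 2`. At `u = x/(x+1)²` this gives `S = (x+1)/x`, and the
series of the theorem is `(x-1)/x · (S - 1 - u)`.
-/

open Finset

lemma catalan_le_four_pow (n : ℕ) : catalan n ≤ 4 ^ n :=
  calc catalan n ≤ (n + 1) * catalan n := Nat.le_mul_of_pos_left _ n.succ_pos
    _ = n.centralBinom := succ_mul_catalan_eq_centralBinom n
    _ ≤ 4 ^ n := Nat.centralBinom_le_four_pow n

noncomputable def catalanGF (u : ℝ) : ℝ := ∑' n, (catalan n : ℝ) * u ^ n

section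

variable {u : ℝ}

lemma summable_catalan_mul_pow (hu₀ : 0 ≤ u) (hu : u < 1 / 4) :
    Summable fun n ↦ (catalan n : ℝ) * u ^ n := by
  refine .of_nonneg_of_le (fun n ↦ by positivity) (fun n ↦ ?_)
    (summable_geometric_of_lt_one (by positivity : 0 ≤ 4 * u) (by linarith))
  rw [mul_pow]
  gcongr
  exact_mod_cast catalan_le_four_pow n

lemma hasSum_catalanGF (hu₀ : 0 ≤ u) (hu : u < 1 / 4) :
    HasSum (fun n ↦ (catalan n : ℝ) * u ^ n) (catalanGF u) :=
  (summable_catalan_mul_pow hu₀ hu).hasSum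

lemma mul_catalanGF_sq (hu₀ : 0 ≤ u) (hu : u < 1 / 4) :
    u * catalanGF u ^ 2 = catalanGF u - 1 := by
  set f : ℕ → ℝ := fun n ↦ (catalan n : ℝ) * u ^ n
  have hf : Summable f := summable_catalan_mul_pow hu₀ hu
  have hf_norm : Summable fun n ↦ ‖f n‖ :=
    hf.congr fun n ↦ (Real.norm_of_nonneg (by positivity)).symm
  have cauchy : ∀ n, u * ∑ kl ∈ antidiagonal n, f kl.1 * f kl.2 = f (n + 1) := by
    intro n
    simp only [f, catalan_succ' n, Nat.cast_sum, Nat.cast_mul, sum_mul, mul_sum]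
    refine sum_congr rfl fun kl hkl ↦ ?_
    rw [← mem_antidiagonal.mp hkl]
    ring
  calc u * catalanGF u ^ 2
      = u * ∑' n, ∑ kl ∈ antidiagonal n, f kl.1 * f kl.2 := by
        rw [sq, catalanGF, tsum_mul_tsum_eq_tsum_sum_antidiagonal_of_summable_norm hf_norm hf_norm]
    _ = ∑' n, f (n + 1) := by rw [← tsum_mul_left]; exact tsum_congr cauchy
    _ = catalanGF u - 1 := by
        rw [catalanGF, hf.tsum_eq_zero_add]
        simp [f]

lemma sq_mul_catalanGF_sub_half (hu₀ : 0 ≤ u) (hu : u < 1 / 4) :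
    (u * catalanGF u - 1 / 2) ^ 2 = 1 / 4 - u := by
  linear_combination u * mul_catalanGF_sq hu₀ hu

lemma monotoneOn_mul_catalanGF : MonotoneOn (fun u ↦ u * catalanGF u) (Set.Ico 0 (1 / 4)) := by
  intro u ⟨hu₀, hu⟩ v ⟨hv₀, hv⟩ huv
  simp only [catalanGF, ← tsum_mul_left]
  refine Summable.tsum_le_tsum (fun n ↦ ?_) ((summable_catalan_mul_pow hu₀ hu).mul_left u)
    ((summable_catalan_mul_pow hv₀ hv).mul_left v)
  rw [mul_left_comm, ← pow_succ', mul_left_comm v, ← pow_succ']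
  gcongr

lemma mul_catalanGF_le_half (hu₀ : 0 ≤ u) (hu : u < 1 / 4) :
    u * catalanGF u ≤ 1 / 2 := by
  by_contra! h
  obtain ⟨v, huv, hv⟩ := exists_between hu
  have hv₀ : 0 ≤ v := hu₀.trans huv.le
  have hmono : u * catalanGF u ≤ v * catalanGF v :=
    monotoneOn_mul_catalanGF ⟨hu₀, hu⟩ ⟨hv₀, hv⟩ huv.le
  -- both `u S u` and `v S v` would lie on the decreasing branch `1/2 + √(1/4 - ·)`
  nlinarith [sq_mul_catalanGF_sub_half hu₀ hu, sq_mul_catalanGF_sub_half hv₀ hv,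
    mul_nonneg (sub_nonneg.mpr hmono)
      (by linarith : (0 : ℝ) ≤ v * catalanGF v + u * catalanGF u - 1)]

theorem mul_catalanGF (hu₀ : 0 ≤ u) (hu : u < 1 / 4) :
    u * catalanGF u = (1 - √(1 - 4 * u)) / 2 := by
  have h := sq_mul_catalanGF_sub_half hu₀ hu
  have hle := mul_catalanGF_le_half hu₀ hu
  have : √(1 - 4 * u) = 1 - 2 * (u * catalanGF u) := by
    rw [Real.sqrt_eq_iff_mul_self_eq_of_pos] <;> nlinarith
  linarith

lemma hasSum_catalan_add_two_mul_pow (hu₀ : 0 ≤ u) (hu : u < 1 / 4) :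
    HasSum (fun i ↦ (catalan (i + 2) : ℝ) * u ^ (i + 2)) (catalanGF u - 1 - u) := by
  have h := (hasSum_nat_add_iff' 2).mpr (hasSum_catalanGF hu₀ hu)
  simpa [sum_range_succ, sub_sub] using h

end

lemma div_add_one_sq_lt_quarter {x : ℝ} (hx : 1 < x) : x / (x + 1) ^ 2 < 1 / 4 := by
  rw [div_lt_iff₀ (by positivity)]
  nlinarith

lemma catalanGF_div_add_one_sq {x : ℝ} (hx : 1 < x) :
    catalanGF (x / (x + 1) ^ 2) = (x + 1) / x := by
  have hx₀ : 0 < x := by linarith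
  have hsqrt : √(1 - 4 * (x / (x + 1) ^ 2)) = (x - 1) / (x + 1) := by
    rw [Real.sqrt_eq_iff_mul_self_eq_of_pos (by apply div_pos <;> linarith)]
    field_simp
    ring
  have h := mul_catalanGF (by positivity) (div_add_one_sq_lt_quarter hx)
  rw [hsqrt] at h
  rw [eq_div_iff hx₀.ne']
  field_simp at h
  linarith

theorem stmt16 (x : ℝ) (hx : 1 < x) :
    Summable (fun i : ℕ =>
        (catalan (i+2) : ℝ) * x^(i+1) * (x - 1) / (x + 1)^(2*(i+2))) ∧
    (∑' i : ℕ, (catalan (i+2) : ℝ) * x^(i+1) * (x - 1) / (x + 1)^(2*(i+2)))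
      = (x - 1)/x^2 - (x - 1)/(x + 1)^2 ∧
    (-3*x - 1) / (x * (x + 1)^2)
      + (∑' i : ℕ, (catalan (i+2) : ℝ) * x^(i+1) * (x - 1) / (x + 1)^(2*(i+2)))
      = -1/x^2 := by
  have hx₀ : 0 < x := by linarith
  have hterms : (fun i : ℕ => (catalan (i+2) : ℝ) * x^(i+1) * (x - 1) / (x + 1)^(2*(i+2)))
      = fun i ↦ (x - 1) / x * ((catalan (i + 2) : ℝ) * (x / (x + 1) ^ 2) ^ (i + 2)) := by
    funext i
    rw [div_pow, pow_mul]
    field_simp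
    ring
  have hvalue : (x - 1) / x * (catalanGF (x / (x + 1) ^ 2) - 1 - x / (x + 1) ^ 2)
      = (x - 1)/x^2 - (x - 1)/(x + 1)^2 := by
    rw [catalanGF_div_add_one_sq hx]
    field_simp
    ring
  have hsum := (hasSum_catalan_add_two_mul_pow (by positivity)
    (div_add_one_sq_lt_quarter hx)).mul_left ((x - 1) / x)
  rw [← hterms, hvalue] at hsum
  refine ⟨hsum.summable, hsum.tsum_eq, ?_⟩
  rw [hsum.tsum_eq]
  field_simp
  ring
end

section
/- For every real number x > 1, the series ∑_{ℓ=2}^∞ (C_{ℓ+1} − C_ℓ)·x^ℓ·(x−1)/(x·(x+1)^{2ℓ+1}) converges and equals (x−1)(3x² + 3x + 1)/(x³(x+1)³). -/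
open Finset

lemma dsum_le (a : ℕ → ℝ) (ha : ∀ n, 0 ≤ a n) (N : ℕ) :
    ∑ n ∈ range N, ∑ ij ∈ antidiagonal n, a ij.1 * a ij.2
      ≤ (∑ n ∈ range N, a n) ^ 2 := by
  have hdisj : (↑(range N) : Set ℕ).PairwiseDisjoint (fun n => antidiagonal n) := by
    intro m _ n _ hmn
    apply Finset.disjoint_left.mpr
    intro p hp hp'
    rw [Finset.HasAntidiagonal.mem_antidiagonal] at hp hp'
    exact hmn (by omega)
  rw [← Finset.sum_biUnion hdisj, sq, Finset.sum_mul_sum, ← Finset.sum_product']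
  apply Finset.sum_le_sum_of_subset_of_nonneg
  · intro p hp
    simp only [Finset.mem_biUnion, Finset.mem_range, Finset.HasAntidiagonal.mem_antidiagonal] at hp
    obtain ⟨n, hn, hpn⟩ := hp
    simp only [Finset.mem_product, Finset.mem_range]
    omega
  · intro p _ _
    exact mul_nonneg (ha _) (ha _)

lemma conv_eq (t : ℝ) (n : ℕ) :
    ∑ ij ∈ antidiagonal n, ((catalan ij.1 : ℝ) * t ^ ij.1) * ((catalan ij.2 : ℝ) * t ^ ij.2)
      = (catalan (n + 1) : ℝ) * t ^ n := by
  rw [catalan_succ']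
  push_cast
  rw [Finset.sum_mul]
  apply Finset.sum_congr rfl
  intro ij hij
  rw [Finset.HasAntidiagonal.mem_antidiagonal] at hij
  rw [← hij, pow_add]
  ring

lemma partial_le (t G : ℝ) (ht : 0 ≤ t) (hG : 1 + t * G ^ 2 = G) (N : ℕ) :
    ∑ n ∈ range N, (catalan n : ℝ) * t ^ n ≤ G := by
  have hG0 : 0 ≤ G := by nlinarith [sq_nonneg G]
  induction N with
  | zero => simpa using hG0
  | succ N ih =>
    rw [Finset.sum_range_succ']
    have h1 : ∀ n : ℕ, (catalan (n+1) : ℝ) * t ^ (n+1)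
        = t * ∑ ij ∈ antidiagonal n,
            ((catalan ij.1 : ℝ) * t ^ ij.1) * ((catalan ij.2 : ℝ) * t ^ ij.2) := by
      intro n
      rw [conv_eq, pow_succ']
      ring
    calc (∑ n ∈ range N, (catalan (n+1) : ℝ) * t ^ (n+1)) + (catalan 0 : ℝ) * t ^ 0
        = 1 + t * ∑ n ∈ range N, ∑ ij ∈ antidiagonal n,
            ((catalan ij.1 : ℝ) * t ^ ij.1) * ((catalan ij.2 : ℝ) * t ^ ij.2) := by
          simp only [h1, catalan_zero, Finset.mul_sum]
          push_cast
          ring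
      _ ≤ 1 + t * (∑ n ∈ range N, (catalan n : ℝ) * t ^ n) ^ 2 := by
          gcongr
          exact dsum_le (fun k => (catalan k : ℝ) * t ^ k)
            (fun n => mul_nonneg (Nat.cast_nonneg _) (pow_nonneg ht n)) N
      _ ≤ 1 + t * G ^ 2 := by
          have hS : (0:ℝ) ≤ ∑ n ∈ range N, (catalan n : ℝ) * t ^ n :=
            Finset.sum_nonneg fun n _ => mul_nonneg (Nat.cast_nonneg _) (pow_nonneg ht n)
          gcongr
      _ = G := hG

lemma catalan_gf (x : ℝ) (hx : 1 < x) :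
    Summable (fun n : ℕ => (catalan n : ℝ) * (x / (x+1)^2) ^ n) ∧
    ∑' n : ℕ, (catalan n : ℝ) * (x / (x+1)^2) ^ n = (x+1)/x := by
  have hx0 : (0:ℝ) < x := lt_trans one_pos hx
  have hx1 : (0:ℝ) < x + 1 := by linarith
  set t : ℝ := x / (x+1)^2 with ht_def
  set G : ℝ := (x+1)/x with hG_def
  have ht : 0 < t := by positivity
  have hG : 1 + t * G ^ 2 = G := by
    rw [ht_def, hG_def]; field_simp
  have hbound := partial_le t G ht.le hG
  have hnn : ∀ n : ℕ, 0 ≤ (catalan n : ℝ) * t ^ n :=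
    fun n => mul_nonneg (Nat.cast_nonneg _) (pow_nonneg ht.le n)
  have hsum : Summable (fun n : ℕ => (catalan n : ℝ) * t ^ n) :=
    summable_of_sum_range_le hnn hbound
  refine ⟨hsum, ?_⟩
  set F : ℝ := ∑' n : ℕ, (catalan n : ℝ) * t ^ n with hF_def
  have hFle : F ≤ G := Summable.tsum_le_of_sum_range_le hsum hbound
  have hnorm : Summable (fun n : ℕ => ‖(catalan n : ℝ) * t ^ n‖) := by
    have : (fun n : ℕ => ‖(catalan n : ℝ) * t ^ n‖)
        = fun n : ℕ => (catalan n : ℝ) * t ^ n := by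
      funext n; rw [Real.norm_eq_abs, abs_of_nonneg (hnn n)]
    rw [this]; exact hsum
  have hcauchy : F * F = ∑' n : ℕ, (catalan (n+1) : ℝ) * t ^ n := by
    rw [hF_def, tsum_mul_tsum_eq_tsum_sum_antidiagonal_of_summable_norm hnorm hnorm]
    exact tsum_congr (conv_eq t)
  have hshift : F = 1 + t * (F * F) := by
    rw [hcauchy, ← tsum_mul_left]
    have h0 : F = (catalan 0 : ℝ) * t ^ 0
        + ∑' n : ℕ, (catalan (n+1) : ℝ) * t ^ (n+1) := Summable.tsum_eq_zero_add hsum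
    simp only [catalan_zero, Nat.cast_one, pow_zero, mul_one] at h0
    rw [h0]
    congr 1
    exact tsum_congr fun n => by rw [pow_succ']; ring
  have key : (x * F - (x+1)) * (F - (x+1)) = 0 := by
    rw [ht_def] at hshift
    field_simp at hshift
    linear_combination -hshift
  have hFlt : F - (x+1) < 0 := by
    have : G < x + 1 := by
      rw [hG_def, div_lt_iff₀ hx0]
      nlinarith
    linarith
  rcases mul_eq_zero.mp key with h | h
  · rw [hG_def]
    field_simp
    linarith
  · linarith

theorem stmt18 (x : ℝ) (hx : 1 < x) :
    Summable (fun l : ℕ =>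
        ((catalan (l+3) : ℝ) - (catalan (l+2) : ℝ)) * x^(l+2) * (x - 1)
          / (x * (x + 1)^(2*(l+2)+1))) ∧
    (∑' l : ℕ, ((catalan (l+3) : ℝ) - (catalan (l+2) : ℝ)) * x^(l+2) * (x - 1)
          / (x * (x + 1)^(2*(l+2)+1)))
      = (x - 1) * (3*x^2 + 3*x + 1) / (x^3 * (x + 1)^3) := by
  have hx0 : (0:ℝ) < x := lt_trans one_pos hx
  have hx1 : (0:ℝ) < x + 1 := by linarith
  have hxne : x ≠ 0 := ne_of_gt hx0
  have hx1ne : x + 1 ≠ 0 := ne_of_gt hx1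
  obtain ⟨hsum, htsum⟩ := catalan_gf x hx
  set t : ℝ := x / (x+1)^2 with ht_def
  set c1 : ℝ := (x-1)*(x+1)/x^2 with hc1_def
  set c2 : ℝ := (x-1)/(x*(x+1)) with hc2_def
  have hpt : ∀ l : ℕ, ((catalan (l+3) : ℝ) - (catalan (l+2) : ℝ)) * x^(l+2) * (x - 1)
          / (x * (x + 1)^(2*(l+2)+1))
      = c1 * ((catalan (l+3) : ℝ) * t^(l+3)) - c2 * ((catalan (l+2) : ℝ) * t^(l+2)) := by
    intro l
    rw [ht_def, hc1_def, hc2_def, div_pow, div_pow, ← pow_mul, ← pow_mul]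
    have e1 : x^(l+3) = x * x^(l+2) := by ring
    have e2 : ((x+1):ℝ)^(2*(l+3)) = (x+1)^(2*(l+2)) * (x+1)^2 := by
      rw [show 2*(l+3) = 2*(l+2) + 2 by ring, pow_add]
    have e3 : ((x+1):ℝ)^(2*(l+2)+1) = (x+1)^(2*(l+2)) * (x+1) := pow_succ _ _
    rw [e1, e2, e3]
    have hY : ((x+1):ℝ)^(2*(l+2)) ≠ 0 := pow_ne_zero _ hx1ne
    generalize x^(l+2) = X
    generalize hYg : ((x+1):ℝ)^(2*(l+2)) = Y at hY ⊢
    field_simp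
  have hs3 : Summable (fun l : ℕ => (catalan (l+3) : ℝ) * t^(l+3)) :=
    (summable_nat_add_iff (f := fun n : ℕ => (catalan n : ℝ) * t^n) 3).mpr hsum
  have hs2 : Summable (fun l : ℕ => (catalan (l+2) : ℝ) * t^(l+2)) :=
    (summable_nat_add_iff (f := fun n : ℕ => (catalan n : ℝ) * t^n) 2).mpr hsum
  have hterm : Summable (fun l : ℕ =>
      ((catalan (l+3) : ℝ) - (catalan (l+2) : ℝ)) * x^(l+2) * (x - 1)
        / (x * (x + 1)^(2*(l+2)+1))) := by
    apply Summable.congr ((hs3.mul_left c1).sub (hs2.mul_left c2))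
    intro l
    exact (hpt l).symm
  refine ⟨hterm, ?_⟩
  have h3 : ∑' l : ℕ, (catalan (l+3) : ℝ) * t^(l+3) = (x+1)/x - (1 + t + 2*t^2) := by
    have := Summable.sum_add_tsum_nat_add 3 hsum
    rw [htsum] at this
    have hr : ∑ i ∈ range 3, (catalan i : ℝ) * t ^ i = 1 + t + 2*t^2 := by
      simp [Finset.sum_range_succ, catalan_zero, catalan_one, catalan_two]
    rw [hr] at this
    linarith
  have h2 : ∑' l : ℕ, (catalan (l+2) : ℝ) * t^(l+2) = (x+1)/x - (1 + t) := by
    have := Summable.sum_add_tsum_nat_add 2 hsum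
    rw [htsum] at this
    have hr : ∑ i ∈ range 2, (catalan i : ℝ) * t ^ i = 1 + t := by
      simp [Finset.sum_range_succ, catalan_zero, catalan_one]
    rw [hr] at this
    linarith
  calc (∑' l : ℕ, ((catalan (l+3) : ℝ) - (catalan (l+2) : ℝ)) * x^(l+2) * (x - 1)
          / (x * (x + 1)^(2*(l+2)+1)))
      = ∑' l : ℕ, (c1 * ((catalan (l+3) : ℝ) * t^(l+3))
          - c2 * ((catalan (l+2) : ℝ) * t^(l+2))) := tsum_congr hpt
    _ = c1 * (∑' l : ℕ, (catalan (l+3) : ℝ) * t^(l+3))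
          - c2 * (∑' l : ℕ, (catalan (l+2) : ℝ) * t^(l+2)) := by
        rw [Summable.tsum_sub (hs3.mul_left c1) (hs2.mul_left c2), tsum_mul_left, tsum_mul_left]
    _ = (x - 1) * (3*x^2 + 3*x + 1) / (x^3 * (x + 1)^3) := by
        rw [h3, h2, ht_def, hc1_def, hc2_def]
        field_simp
        ring
end
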